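/- There exists a constant d̄ > 0, depending only on a₁, a₂, b₁, b₂, c₁, c₂, γ, δ, such that for every d > d̄, every solution (w, τ) of the one-dimensional limiting system with diffusion coefficient d has w constant on [0,1]; that is, the system admits no nonconstant solution when d > d̄. -/

import Mathlib

open Set

/-- The nonlinearity `h(u,τ) = u(a₁ − b₁u) − c₁τ − (γτ/u)(a₂ − b₂u − c₂τ/u)`. -/
noncomputable def hfun (a₁ a₂ b₁ b₂ c₁ c₂ γ : ℝ) (u τ : ℝ) : ℝ :=
  u * (a₁ - b₁ * u) - c₁ * τ - (γ * τ / u) * (a₂ - b₂ * u - c₂ * τ / u)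

/-- The change of variables `U(w,τ) = (√(w² + 4γδτ) + w)/(2δ)`. -/
noncomputable def Ufun (γ δ : ℝ) (w τ : ℝ) : ℝ :=
  (Real.sqrt (w ^ 2 + 4 * γ * δ * τ) + w) / (2 * δ)

/-!
The integral constraint forces `4 b₁ c₁ τ ≤ a₁²`. At a maximum point of `w` we have `w'' ≤ 0`,
so `h ≥ 0` there, which bounds `u = U(w, τ)` from above; at a minimum point `h ≤ 0`, which then
bounds `τ / u` from above. As `U` is increasing in `w`, both bounds hold on all of `[0, 1]`.
On that range `s ↦ h(U(s, τ), τ)` is Lipschitz with a constant `L` depending only on the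
coefficients, because `U(·, τ)` is inverted by `u ↦ δu - γτ/u`, whose difference quotients are
at least `δ`. Testing `d w'' + h = 0` against `w - w̄` gives
`d ∫ w'² ≤ L (∫ |w'|)² ≤ L ∫ w'²`, so `w' = 0` as soon as `d > L`.
-/

noncomputable def Wfun (γ δ : ℝ) (u τ : ℝ) : ℝ := δ * u - γ * τ / u

section ChangeOfVariables

variable {γ δ τ : ℝ}

lemma Ufun_pos (hγ : 0 < γ) (hδ : 0 < δ) (hτ : 0 < τ) (w : ℝ) : 0 < Ufun γ δ w τ := by
  have hlt : |w| < Real.sqrt (w ^ 2 + 4 * γ * δ * τ) := by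
    rw [← Real.sqrt_sq_eq_abs]
    exact Real.sqrt_lt_sqrt (sq_nonneg w) (by linarith [show 0 < 4 * γ * δ * τ by positivity])
  unfold Ufun
  have := neg_abs_le w
  apply div_pos <;> linarith

lemma Wfun_Ufun (hγ : 0 < γ) (hδ : 0 < δ) (hτ : 0 < τ) (w : ℝ) :
    Wfun γ δ (Ufun γ δ w τ) τ = w := by
  have hu := (Ufun_pos hγ hδ hτ w).ne'
  have hsq : Real.sqrt (w ^ 2 + 4 * γ * δ * τ) ^ 2 = w ^ 2 + 4 * γ * δ * τ :=
    Real.sq_sqrt (by positivity)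
  have hquad : δ * Ufun γ δ w τ ^ 2 = w * Ufun γ δ w τ + γ * τ := by
    unfold Ufun
    generalize Real.sqrt (w ^ 2 + 4 * γ * δ * τ) = s at hsq
    field_simp
    linear_combination hsq
  unfold Wfun
  field_simp
  linear_combination hquad

lemma Wfun_sub_Wfun {u₁ u₂ : ℝ} (hu₁ : u₁ ≠ 0) (hu₂ : u₂ ≠ 0) :
    Wfun γ δ u₁ τ - Wfun γ δ u₂ τ = (u₁ - u₂) * (δ + γ * τ / (u₁ * u₂)) := by
  unfold Wfun
  field_simp
  ring

lemma strictMonoOn_Wfun (hγ : 0 < γ) (hδ : 0 < δ) (hτ : 0 < τ) :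
    StrictMonoOn (fun u => Wfun γ δ u τ) (Ioi 0) := by
  intro u₁ (hu₁ : 0 < u₁) u₂ (hu₂ : 0 < u₂) h
  rw [← sub_pos, Wfun_sub_Wfun hu₂.ne' hu₁.ne']
  exact mul_pos (sub_pos.2 h) (by positivity)

lemma monotone_Ufun (hγ : 0 < γ) (hδ : 0 < δ) (hτ : 0 < τ) :
    Monotone (fun w => Ufun γ δ w τ) := by
  intro w₁ w₂ hw
  rw [← (strictMonoOn_Wfun hγ hδ hτ).le_iff_le (Ufun_pos hγ hδ hτ w₁) (Ufun_pos hγ hδ hτ w₂)]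
  simpa only [Wfun_Ufun hγ hδ hτ] using hw

lemma continuous_Ufun : Continuous (fun w => Ufun γ δ w τ) := by
  unfold Ufun
  fun_prop

end ChangeOfVariables

lemma le_add_sqrt_of_sq_le {x a b : ℝ} (ha : 0 ≤ a) (hb : 0 ≤ b) (h : x ^ 2 ≤ a * x + b) :
    x ≤ a + Real.sqrt b := by
  by_contra! hlt
  have hs : Real.sqrt b ^ 2 = b := Real.sq_sqrt hb
  nlinarith [Real.sqrt_nonneg b]

section Reaction

variable {a₁ a₂ b₁ b₂ c₁ c₂ γ δ τ : ℝ}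

lemma hfun_mul_sq {u : ℝ} (hu : u ≠ 0) :
    hfun a₁ a₂ b₁ b₂ c₁ c₂ γ u τ * u ^ 2 =
      a₁ * u ^ 3 - b₁ * u ^ 4 - c₁ * τ * u ^ 2 - γ * τ * a₂ * u + γ * τ * b₂ * u ^ 2
        + γ * c₂ * τ ^ 2 := by
  unfold hfun
  field_simp
  ring

lemma le_of_hfun_nonneg {T u : ℝ} (ha₁ : 0 ≤ a₁) (ha₂ : 0 ≤ a₂) (hb₁ : 0 < b₁) (hb₂ : 0 ≤ b₂)
    (hc₁ : 0 ≤ c₁) (hc₂ : 0 ≤ c₂) (hγ : 0 ≤ γ) (hτ : 0 ≤ τ) (hτT : τ ≤ T) (hu : 0 < u)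
    (h : 0 ≤ hfun a₁ a₂ b₁ b₂ c₁ c₂ γ u τ) :
    u ≤ 1 + a₁ / b₁ + Real.sqrt ((γ * T * b₂ + γ * c₂ * T ^ 2) / b₁) := by
  have hT : 0 ≤ T := hτ.trans hτT
  rcases le_or_gt u 1 with hu1 | hu1
  · have := Real.sqrt_nonneg ((γ * T * b₂ + γ * c₂ * T ^ 2) / b₁)
    have : 0 ≤ a₁ / b₁ := by positivity
    linarith
  have hquart : 0 ≤ a₁ * u ^ 3 - b₁ * u ^ 4 - c₁ * τ * u ^ 2 - γ * τ * a₂ * u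
      + γ * τ * b₂ * u ^ 2 + γ * c₂ * τ ^ 2 := by
    rw [← hfun_mul_sq hu.ne']; exact mul_nonneg h (sq_nonneg u)
  have hsq : 1 ≤ u ^ 2 := by nlinarith
  -- for `u ≥ 1` the constant term is absorbed into the `u²` term
  have hquad : b₁ * u ^ 2 ≤ a₁ * u + (γ * T * b₂ + γ * c₂ * T ^ 2) := by
    refine le_of_mul_le_mul_right ?_ (by positivity : 0 < u ^ 2)
    have : γ * τ * b₂ ≤ γ * T * b₂ := by gcongr
    have : γ * c₂ * τ ^ 2 ≤ γ * c₂ * T ^ 2 * u ^ 2 := by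
      calc γ * c₂ * τ ^ 2 ≤ γ * c₂ * T ^ 2 := by gcongr
        _ ≤ γ * c₂ * T ^ 2 * u ^ 2 := le_mul_of_one_le_right (by positivity) hsq
    nlinarith [mul_nonneg (mul_nonneg hc₁ hτ) (sq_nonneg u),
      mul_nonneg (mul_nonneg (mul_nonneg hγ hτ) ha₂) hu.le]
  have := le_add_sqrt_of_sq_le (by positivity) (by positivity)
    (show u ^ 2 ≤ a₁ / b₁ * u + (γ * T * b₂ + γ * c₂ * T ^ 2) / b₁ by
      rw [div_mul_eq_mul_div, ← add_div, le_div_iff₀ hb₁]; linarith)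
  linarith

lemma le_mul_of_hfun_nonpos {T K u : ℝ} (ha₁ : 0 ≤ a₁) (ha₂ : 0 ≤ a₂) (hb₁ : 0 ≤ b₁) (hb₂ : 0 ≤ b₂)
    (hc₁ : 0 ≤ c₁) (hc₂ : 0 < c₂) (hγ : 0 < γ) (hτ : 0 < τ) (hτT : τ ≤ T) (hu : 0 < u)
    (huK : u ≤ K) (h : hfun a₁ a₂ b₁ b₂ c₁ c₂ γ u τ ≤ 0) :
    τ ≤ (a₂ / c₂ + Real.sqrt ((b₁ * K ^ 2 + c₁ * T) / (γ * c₂))) * u := by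
  have hquart : a₁ * u ^ 3 - b₁ * u ^ 4 - c₁ * τ * u ^ 2 - γ * τ * a₂ * u
      + γ * τ * b₂ * u ^ 2 + γ * c₂ * τ ^ 2 ≤ 0 := by
    rw [← hfun_mul_sq hu.ne']; exact mul_nonpos_of_nonpos_of_nonneg h (sq_nonneg u)
  -- in terms of `v = τ / u` the quartic inequality becomes quadratic in `v`
  set v := τ / u with hv
  have hτv : τ = v * u := by rw [hv, div_mul_cancel₀ _ hu.ne']
  have hvpos : 0 < v := by positivity
  have hT : 0 ≤ T := hτ.le.trans hτT
  have hquad : γ * c₂ * v ^ 2 ≤ γ * a₂ * v + (b₁ * K ^ 2 + c₁ * T) := by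
    have hK : b₁ * u ^ 2 * u ^ 2 ≤ b₁ * K ^ 2 * u ^ 2 := by gcongr
    have hT : c₁ * (v * u) * u ^ 2 ≤ c₁ * T * u ^ 2 := by rw [← hτv]; gcongr
    refine le_of_mul_le_mul_right ?_ (by positivity : 0 < u ^ 2)
    rw [hτv] at hquart
    nlinarith [mul_nonneg (mul_nonneg (mul_nonneg hγ.le hvpos.le) hb₂) (pow_pos hu 3).le,
      mul_nonneg ha₁ (pow_pos hu 3).le]
  have := le_add_sqrt_of_sq_le (by positivity) (by positivity)
    (show v ^ 2 ≤ a₂ / c₂ * v + (b₁ * K ^ 2 + c₁ * T) / (γ * c₂) by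
      rw [show a₂ / c₂ * v + (b₁ * K ^ 2 + c₁ * T) / (γ * c₂)
          = (γ * a₂ * v + (b₁ * K ^ 2 + c₁ * T)) / (γ * c₂) by field_simp,
        le_div_iff₀ (by positivity)]
      linarith)
  rw [hτv]
  exact mul_le_mul_of_nonneg_right this hu.le

end Reaction

section Lipschitz

variable {a₁ a₂ b₁ b₂ c₁ c₂ γ δ τ : ℝ}

lemma hfun_sub_hfun {u₁ u₂ : ℝ} (hu₁ : u₁ ≠ 0) (hu₂ : u₂ ≠ 0) :
    hfun a₁ a₂ b₁ b₂ c₁ c₂ γ u₁ τ - hfun a₁ a₂ b₁ b₂ c₁ c₂ γ u₂ τ =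
      (u₁ - u₂) * (a₁ - b₁ * (u₁ + u₂)
        + (a₂ - c₂ * (τ / u₁ + τ / u₂)) * (γ * τ / (u₁ * u₂))) := by
  unfold hfun
  field_simp
  ring

lemma abs_hfun_sub_hfun_le {K V u₁ u₂ : ℝ} (ha₁ : 0 ≤ a₁) (ha₂ : 0 ≤ a₂) (hb₁ : 0 ≤ b₁)
    (hc₂ : 0 ≤ c₂) (hγ : 0 < γ) (hδ : 0 < δ) (hτ : 0 < τ) (hu₁ : 0 < u₁) (hu₂ : 0 < u₂)
    (hK₁ : u₁ ≤ K) (hK₂ : u₂ ≤ K) (hV₁ : τ ≤ V * u₁) (hV₂ : τ ≤ V * u₂) :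
    |hfun a₁ a₂ b₁ b₂ c₁ c₂ γ u₁ τ - hfun a₁ a₂ b₁ b₂ c₁ c₂ γ u₂ τ| ≤
      ((a₁ + 2 * b₁ * K) / δ + (a₂ + 2 * c₂ * V)) * |Wfun γ δ u₁ τ - Wfun γ δ u₂ τ| := by
  have hV : 0 ≤ V := nonneg_of_mul_nonneg_left (hτ.le.trans hV₁) hu₁
  have hv₁ : τ / u₁ ≤ V := by rwa [div_le_iff₀ hu₁]
  have hv₂ : τ / u₂ ≤ V := by rwa [div_le_iff₀ hu₂]
  have := div_pos hτ hu₁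
  have := div_pos hτ hu₂
  set p := γ * τ / (u₁ * u₂)
  have hp : 0 ≤ p := by positivity
  have hQ : |a₁ - b₁ * (u₁ + u₂) + (a₂ - c₂ * (τ / u₁ + τ / u₂)) * p| ≤
      (a₁ + 2 * b₁ * K) + (a₂ + 2 * c₂ * V) * p := by
    have h₁ : |a₁ - b₁ * (u₁ + u₂)| ≤ a₁ + 2 * b₁ * K := by
      rw [abs_le]; constructor <;> nlinarith
    have h₂ : |a₂ - c₂ * (τ / u₁ + τ / u₂)| ≤ a₂ + 2 * c₂ * V := by
      rw [abs_le]; constructor <;> nlinarith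
    calc _ ≤ |a₁ - b₁ * (u₁ + u₂)| + |a₂ - c₂ * (τ / u₁ + τ / u₂)| * p := by
          simpa only [abs_mul, abs_of_nonneg hp] using
            abs_add_le (a₁ - b₁ * (u₁ + u₂)) ((a₂ - c₂ * (τ / u₁ + τ / u₂)) * p)
      _ ≤ (a₁ + 2 * b₁ * K) + (a₂ + 2 * c₂ * V) * p := by gcongr
  have hL : (a₁ + 2 * b₁ * K) + (a₂ + 2 * c₂ * V) * p ≤
      ((a₁ + 2 * b₁ * K) / δ + (a₂ + 2 * c₂ * V)) * (δ + p) := by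
    have hK : 0 ≤ K := hu₁.le.trans hK₁
    have : ((a₁ + 2 * b₁ * K) / δ + (a₂ + 2 * c₂ * V)) * (δ + p) =
        (a₁ + 2 * b₁ * K) + (a₂ + 2 * c₂ * V) * p
          + ((a₁ + 2 * b₁ * K) / δ * p + (a₂ + 2 * c₂ * V) * δ) := by
      field_simp
      ring
    rw [this, le_add_iff_nonneg_right]
    positivity
  rw [hfun_sub_hfun hu₁.ne' hu₂.ne', Wfun_sub_Wfun hu₁.ne' hu₂.ne', abs_mul, abs_mul,
    abs_of_pos (by positivity : 0 < δ + p), mul_left_comm]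
  gcongr
  exact hQ.trans hL

end Lipschitz

open scoped NNReal in
lemma exists_lipschitzOnWith_hfun_Ufun {a₁ a₂ b₁ b₂ c₁ c₂ γ δ : ℝ}
    (ha₁ : 0 ≤ a₁) (ha₂ : 0 ≤ a₂) (hb₁ : 0 < b₁) (hb₂ : 0 ≤ b₂) (hc₁ : 0 < c₁) (hc₂ : 0 < c₂)
    (hγ : 0 < γ) (hδ : 0 < δ) :
    ∃ L : ℝ≥0, 0 < L ∧ ∀ τ m M : ℝ, 0 < τ → 4 * b₁ * c₁ * τ ≤ a₁ ^ 2 → m ≤ M →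
      0 ≤ hfun a₁ a₂ b₁ b₂ c₁ c₂ γ (Ufun γ δ M τ) τ →
      hfun a₁ a₂ b₁ b₂ c₁ c₂ γ (Ufun γ δ m τ) τ ≤ 0 →
      LipschitzOnWith L (fun s => hfun a₁ a₂ b₁ b₂ c₁ c₂ γ (Ufun γ δ s τ) τ) (Icc m M) := by
  set T := a₁ ^ 2 / (4 * b₁ * c₁)
  set K := 1 + a₁ / b₁ + Real.sqrt ((γ * T * b₂ + γ * c₂ * T ^ 2) / b₁)
  set V := a₂ / c₂ + Real.sqrt ((b₁ * K ^ 2 + c₁ * T) / (γ * c₂))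
  set L := (a₁ + 2 * b₁ * K) / δ + (a₂ + 2 * c₂ * V)
  have hK : 0 < K := by positivity
  refine ⟨L.toNNReal, Real.toNNReal_pos.2 (by positivity), ?_⟩
  intro τ m M hτ hτT hmM hM hm
  replace hτT : τ ≤ T := by rw [le_div_iff₀ (by positivity)]; linarith
  have hU := Ufun_pos hγ hδ hτ
  have hmono := monotone_Ufun hγ hδ hτ
  have hUK : ∀ s ≤ M, Ufun γ δ s τ ≤ K := fun s hs =>
    (hmono hs).trans (le_of_hfun_nonneg ha₁ ha₂ hb₁ hb₂ hc₁.le hc₂.le hγ.le hτ.le hτT (hU M) hM)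
  have hUV : ∀ s, m ≤ s → τ ≤ V * Ufun γ δ s τ := fun s hs =>
    (le_mul_of_hfun_nonpos ha₁ ha₂ hb₁.le hb₂ hc₁.le hc₂ hγ hτ hτT (hU m) (hUK m hmM) hm).trans
      (by gcongr; exact hmono hs)
  refine LipschitzOnWith.of_dist_le_mul fun s hs t ht => ?_
  rw [Real.coe_toNNReal _ (by positivity), Real.dist_eq, Real.dist_eq]
  simpa only [Wfun_Ufun hγ hδ hτ] using abs_hfun_sub_hfun_le ha₁ ha₂ hb₁.le hc₂.le hγ hδ hτ
    (hU s) (hU t) (hUK s hs.2) (hUK t ht.2) (hUV s hs.1) (hUV t ht.1)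

section Calculus

open MeasureTheory

variable {a b : ℝ} {f f' f'' : ℝ → ℝ}

lemma sq_integral_le_integral_sq {g : ℝ → ℝ} (hg : ContinuousOn g (Icc 0 1)) :
    (∫ x in (0:ℝ)..1, g x) ^ 2 ≤ ∫ x in (0:ℝ)..1, g x ^ 2 := by
  set A := ∫ x in (0:ℝ)..1, g x
  have hi : IntervalIntegrable g volume 0 1 :=
    hg.intervalIntegrable_of_Icc zero_le_one
  have hi2 : IntervalIntegrable (fun x => g x ^ 2) volume 0 1 :=
    (hg.pow 2).intervalIntegrable_of_Icc zero_le_one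
  -- the variance `∫ (g - A)²` is nonnegative
  have hvar : ∫ x in (0:ℝ)..1, (g x - A) ^ 2 = (∫ x in (0:ℝ)..1, g x ^ 2) - A ^ 2 := by
    have e : (fun x => (g x - A) ^ 2) = fun x => g x ^ 2 - 2 * A * g x + A ^ 2 := by
      funext x; ring
    rw [e, intervalIntegral.integral_add (hi2.sub (hi.const_mul _)) intervalIntegrable_const,
      intervalIntegral.integral_sub hi2 (hi.const_mul _), intervalIntegral.integral_const_mul,
      intervalIntegral.integral_const]
    simp only [sub_zero, smul_eq_mul, one_mul]
    ring
  have : 0 ≤ ∫ x in (0:ℝ)..1, (g x - A) ^ 2 :=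
    intervalIntegral.integral_nonneg zero_le_one fun x _ => sq_nonneg _
  linarith

lemma abs_sub_integral_le {g : ℝ → ℝ} {A z : ℝ} (hg : ContinuousOn g (Icc 0 1))
    (hA : ∀ t ∈ Icc (0:ℝ) 1, |g z - g t| ≤ A) : |g z - ∫ t in (0:ℝ)..1, g t| ≤ A := by
  have hint : ∫ t in (0:ℝ)..1, (g z - g t) = g z - ∫ t in (0:ℝ)..1, g t := by
    rw [intervalIntegral.integral_sub intervalIntegrable_const
      (hg.intervalIntegrable_of_Icc zero_le_one)]
    simp
  rw [← hint]
  simpa using intervalIntegral.norm_integral_le_of_norm_le_const (a := 0) (b := 1)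
    (f := fun t => g z - g t) fun t ht => hA t (Ioc_subset_Icc_self (by simpa using ht))

lemma integral_mem_Icc {g : ℝ → ℝ} {m M : ℝ} (hg : ContinuousOn g (Icc 0 1))
    (hmM : MapsTo g (Icc 0 1) (Icc m M)) : ∫ t in (0:ℝ)..1, g t ∈ Icc m M := by
  have hi : IntervalIntegrable g volume 0 1 := hg.intervalIntegrable_of_Icc zero_le_one
  constructor
  · simpa using intervalIntegral.integral_mono_on zero_le_one intervalIntegrable_const hi
      fun t ht => (hmM ht).1
  · simpa using intervalIntegral.integral_mono_on zero_le_one hi intervalIntegrable_const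
      fun t ht => (hmM ht).2

lemma HasDerivWithinAt.hasDerivAt_of_mem_Ioo {x : ℝ} (h : HasDerivWithinAt f (f' x) (Icc a b) x)
    (hx : x ∈ Ioo a b) : HasDerivAt f (f' x) x :=
  h.hasDerivAt (Icc_mem_nhds hx.1 hx.2)

lemma abs_sub_le_integral_abs_deriv (hf : ∀ x ∈ Icc a b, HasDerivWithinAt f (f' x) (Icc a b) x)
    (hf' : ContinuousOn f' (Icc a b)) {s t : ℝ} (hs : s ∈ Icc a b) (ht : t ∈ Icc a b) :
    |f t - f s| ≤ ∫ x in a..b, |f' x| := by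
  wlog hst : s ≤ t generalizing s t
  · rw [abs_sub_comm]; exact this ht hs (le_of_not_ge hst)
  have hsub : Icc s t ⊆ Icc a b := Icc_subset_Icc hs.1 ht.2
  have hFTC : ∫ x in s..t, f' x = f t - f s :=
    intervalIntegral.integral_eq_sub_of_hasDerivAt_of_le hst
      (fun x hx => (hf x (hsub hx)).continuousWithinAt.mono hsub)
      (fun x hx => (hf x (hsub (Ioo_subset_Icc_self hx))).hasDerivAt_of_mem_Ioo
        ⟨hs.1.trans_lt hx.1, hx.2.trans_le ht.2⟩)
      ((hf'.mono hsub).intervalIntegrable_of_Icc hst)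
  rw [← hFTC]
  calc |∫ x in s..t, f' x| ≤ ∫ x in s..t, |f' x| :=
        intervalIntegral.abs_integral_le_integral_abs hst
    _ ≤ ∫ x in a..b, |f' x| :=
        intervalIntegral.integral_mono_interval hs.1 hst ht.2
          (Filter.Eventually.of_forall fun _ => abs_nonneg _)
          (hf'.abs.intervalIntegrable_of_Icc (hs.1.trans (hst.trans ht.2)))

lemma integral_sub_mul_deriv2_eq_neg (hab : a ≤ b) (c : ℝ)
    (hf : ∀ x ∈ Icc a b, HasDerivWithinAt f (f' x) (Icc a b) x)
    (hf' : ∀ x ∈ Icc a b, HasDerivWithinAt f' (f'' x) (Icc a b) x)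
    (hf'' : ContinuousOn f'' (Icc a b)) (ha : f' a = 0) (hb : f' b = 0) :
    ∫ x in a..b, (f x - c) * f'' x = -∫ x in a..b, f' x ^ 2 := by
  rw [← uIcc_of_le hab] at hf hf' hf''
  have hcont : ContinuousOn f' (uIcc a b) := fun x hx => (hf' x hx).continuousWithinAt
  rw [intervalIntegral.integral_mul_deriv_eq_deriv_mul_of_hasDerivWithinAt
      (fun x hx => (hf x hx).sub_const c) hf' hcont.intervalIntegrable hf''.intervalIntegrable,
    ha, hb]
  simp only [mul_zero, sub_zero, zero_sub, sq]

lemma four_mul_le_sq_of_integral_eq_zero {a₁ b₁ c₁ τ : ℝ} {u : ℝ → ℝ} (hb₁ : 0 < b₁)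
    (hu : ContinuousOn u (Icc 0 1))
    (h : ∫ x in (0:ℝ)..1, (u x * (a₁ - b₁ * u x) - c₁ * τ) = 0) : 4 * b₁ * c₁ * τ ≤ a₁ ^ 2 := by
  have hpt : ∀ x ∈ Icc (0:ℝ) 1,
      u x * (a₁ - b₁ * u x) - c₁ * τ ≤ (a₁ ^ 2 - 4 * b₁ * c₁ * τ) / (4 * b₁) := fun x _ => by
    rw [le_div_iff₀ (by positivity)]
    nlinarith [sq_nonneg (a₁ - 2 * b₁ * u x)]
  have hi : IntervalIntegrable (fun x => u x * (a₁ - b₁ * u x) - c₁ * τ) volume 0 1 :=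
    ((hu.mul (continuousOn_const.sub (continuousOn_const.mul hu))).sub
      continuousOn_const).intervalIntegrable_of_Icc zero_le_one
  have := intervalIntegral.integral_mono_on zero_le_one hi intervalIntegrable_const hpt
  rw [h, intervalIntegral.integral_const, sub_zero, one_smul, le_div_iff₀ (by positivity)] at this
  linarith

end Calculus

section SecondDerivativeTest

variable {a b : ℝ} {f f' f'' : ℝ → ℝ}

lemma deriv_eq_zero_of_isMinOn_Icc (hf : ∀ x ∈ Icc a b, HasDerivWithinAt f (f' x) (Icc a b) x)
    (ha : f' a = 0) (hb : f' b = 0) {x₀ : ℝ} (hx₀ : x₀ ∈ Icc a b)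
    (hmin : IsMinOn f (Icc a b) x₀) : f' x₀ = 0 := by
  rcases hx₀.1.eq_or_lt with rfl | hax
  · exact ha
  rcases hx₀.2.eq_or_lt with rfl | hxb
  · exact hb
  exact (hmin.isLocalMin (Icc_mem_nhds hax hxb)).hasDerivAt_eq_zero
    ((hf x₀ hx₀).hasDerivAt_of_mem_Ioo ⟨hax, hxb⟩)

lemma lt_of_deriv_left_eq_zero_of_deriv2_neg (hab : a < b) (hf : ContinuousOn f (Icc a b))
    (hf' : ContinuousOn f' (Icc a b)) (hfd : ∀ x ∈ Ioo a b, HasDerivAt f (f' x) x)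
    (hf'd : ∀ x ∈ Ioo a b, HasDerivAt f' (f'' x) x) (h0 : f' a = 0)
    (hneg : ∀ x ∈ Ioo a b, f'' x < 0) : f b < f a := by
  have hanti : StrictAntiOn f' (Icc a b) :=
    strictAntiOn_of_hasDerivWithinAt_neg (convex_Icc a b) hf'
      (by simpa using fun x hx => (hf'd x hx).hasDerivWithinAt) (by simpa using hneg)
  refine strictAntiOn_of_hasDerivWithinAt_neg (convex_Icc a b) hf
    (by simpa using fun x hx => (hfd x hx).hasDerivWithinAt) ?_
    (left_mem_Icc.2 hab.le) (right_mem_Icc.2 hab.le) hab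
  simp only [interior_Icc]
  intro x hx
  simpa [h0] using hanti (left_mem_Icc.2 hab.le) (Ioo_subset_Icc_self hx) hx.1

lemma lt_of_deriv_right_eq_zero_of_deriv2_neg (hab : a < b) (hf : ContinuousOn f (Icc a b))
    (hf' : ContinuousOn f' (Icc a b)) (hfd : ∀ x ∈ Ioo a b, HasDerivAt f (f' x) x)
    (hf'd : ∀ x ∈ Ioo a b, HasDerivAt f' (f'' x) x) (h0 : f' b = 0)
    (hneg : ∀ x ∈ Ioo a b, f'' x < 0) : f a < f b := by
  have hanti : StrictAntiOn f' (Icc a b) :=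
    strictAntiOn_of_hasDerivWithinAt_neg (convex_Icc a b) hf'
      (by simpa using fun x hx => (hf'd x hx).hasDerivWithinAt) (by simpa using hneg)
  refine strictMonoOn_of_hasDerivWithinAt_pos (convex_Icc a b) hf
    (by simpa using fun x hx => (hfd x hx).hasDerivWithinAt) ?_
    (left_mem_Icc.2 hab.le) (right_mem_Icc.2 hab.le) hab
  simp only [interior_Icc]
  intro x hx
  simpa [h0] using hanti (Ioo_subset_Icc_self hx) (right_mem_Icc.2 hab.le) hx.2

lemma deriv2_nonneg_of_isMinOn (hab : a < b)
    (hf : ∀ x ∈ Icc a b, HasDerivWithinAt f (f' x) (Icc a b) x)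
    (hf' : ∀ x ∈ Icc a b, HasDerivWithinAt f' (f'' x) (Icc a b) x)
    (hf'' : ContinuousOn f'' (Icc a b)) (ha : f' a = 0) (hb : f' b = 0) {x₀ : ℝ}
    (hx₀ : x₀ ∈ Icc a b) (hmin : IsMinOn f (Icc a b) x₀) : 0 ≤ f'' x₀ := by
  have h0 := deriv_eq_zero_of_isMinOn_Icc hf ha hb hx₀ hmin
  by_contra! hneg
  obtain ⟨ε, hε, hball⟩ := Metric.mem_nhdsWithin_iff.1
    ((hf'' x₀ hx₀).eventually_lt continuousWithinAt_const hneg)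
  have hfc : ContinuousOn f (Icc a b) := fun x hx => (hf x hx).continuousWithinAt
  have hf'c : ContinuousOn f' (Icc a b) := fun x hx => (hf' x hx).continuousWithinAt
  have hfd : ∀ x ∈ Ioo a b, HasDerivAt f (f' x) x := fun x hx =>
    (hf x (Ioo_subset_Icc_self hx)).hasDerivAt_of_mem_Ioo hx
  have hf'd : ∀ x ∈ Ioo a b, HasDerivAt f' (f'' x) x := fun x hx =>
    (hf' x (Ioo_subset_Icc_self hx)).hasDerivAt_of_mem_Ioo hx
  have hneg' : ∀ x ∈ Icc a b, |x - x₀| < ε → f'' x < 0 := fun x hx hxε =>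
    hball ⟨by rwa [Metric.mem_ball, Real.dist_eq], hx⟩
  rcases hx₀.2.lt_or_eq with hxb | rfl
  · set q := min (x₀ + ε / 2) b
    have hxq : x₀ < q := lt_min (by linarith) hxb
    have hsub : Icc x₀ q ⊆ Icc a b := Icc_subset_Icc hx₀.1 (min_le_right _ _)
    have hlt := lt_of_deriv_left_eq_zero_of_deriv2_neg hxq (hfc.mono hsub) (hf'c.mono hsub)
      (fun x hx => hfd x (Ioo_subset_Ioo hx₀.1 (min_le_right _ _) hx))
      (fun x hx => hf'd x (Ioo_subset_Ioo hx₀.1 (min_le_right _ _) hx)) h0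
      (fun x hx => hneg' x (hsub (Ioo_subset_Icc_self hx)) (by
        rw [abs_lt]; constructor <;> linarith [hx.1, hx.2, min_le_left (x₀ + ε / 2) b]))
    exact (hmin (hsub (right_mem_Icc.2 hxq.le))).not_gt hlt
  · set p := max (x₀ - ε / 2) a
    have hpx : p < x₀ := max_lt (by linarith) hab
    have hsub : Icc p x₀ ⊆ Icc a x₀ := Icc_subset_Icc (le_max_right _ _) le_rfl
    have hlt := lt_of_deriv_right_eq_zero_of_deriv2_neg hpx (hfc.mono hsub) (hf'c.mono hsub)
      (fun x hx => hfd x (Ioo_subset_Ioo (le_max_right _ _) le_rfl hx))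
      (fun x hx => hf'd x (Ioo_subset_Ioo (le_max_right _ _) le_rfl hx)) h0
      (fun x hx => hneg' x (hsub (Ioo_subset_Icc_self hx)) (by
        rw [abs_lt]; constructor <;> linarith [hx.1, hx.2, le_max_left (x₀ - ε / 2) a]))
    exact (hmin (hsub (left_mem_Icc.2 hpx.le))).not_gt hlt

lemma deriv2_nonpos_of_isMaxOn (hab : a < b)
    (hf : ∀ x ∈ Icc a b, HasDerivWithinAt f (f' x) (Icc a b) x)
    (hf' : ∀ x ∈ Icc a b, HasDerivWithinAt f' (f'' x) (Icc a b) x)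
    (hf'' : ContinuousOn f'' (Icc a b)) (ha : f' a = 0) (hb : f' b = 0) {x₀ : ℝ}
    (hx₀ : x₀ ∈ Icc a b) (hmax : IsMaxOn f (Icc a b) x₀) : f'' x₀ ≤ 0 := by
  simpa using deriv2_nonneg_of_isMinOn (f := -f) (f' := -f') (f'' := -f'') hab
    (fun x hx => (hf x hx).neg) (fun x hx => (hf' x hx).neg) hf''.neg (by simp [ha])
    (by simp [hb]) hx₀ hmax.neg

end SecondDerivativeTest

open MeasureTheory NNReal in
theorem eq_of_neumann_of_lipschitzOnWith {F w w' w'' : ℝ → ℝ} {L : ℝ≥0} {d m M : ℝ}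
    (hd : L < d) (hw : ∀ x ∈ Icc (0:ℝ) 1, HasDerivWithinAt w (w' x) (Icc 0 1) x)
    (hw' : ∀ x ∈ Icc (0:ℝ) 1, HasDerivWithinAt w' (w'' x) (Icc 0 1) x)
    (hw'' : ContinuousOn w'' (Icc 0 1)) (h0 : w' 0 = 0) (h1 : w' 1 = 0)
    (hmM : MapsTo w (Icc 0 1) (Icc m M)) (hF : LipschitzOnWith L F (Icc m M))
    (heq : ∀ x ∈ Icc (0:ℝ) 1, d * w'' x + F (w x) = 0) {x y : ℝ} (hx : x ∈ Icc (0:ℝ) 1)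
    (hy : y ∈ Icc (0:ℝ) 1) : w x = w y := by
  have hwc : ContinuousOn w (Icc 0 1) := fun t ht => (hw t ht).continuousWithinAt
  have hw'c : ContinuousOn w' (Icc 0 1) := fun t ht => (hw' t ht).continuousWithinAt
  set wbar := ∫ t in (0:ℝ)..1, w t
  set I := ∫ t in (0:ℝ)..1, w' t ^ 2
  set A := ∫ t in (0:ℝ)..1, |w' t|
  have hosc : ∀ s ∈ Icc (0:ℝ) 1, ∀ t ∈ Icc (0:ℝ) 1, |w s - w t| ≤ A := fun s hs t ht =>
    abs_sub_le_integral_abs_deriv hw hw'c ht hs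
  have hAI : A ^ 2 ≤ I := by simpa only [sq_abs] using sq_integral_le_integral_sq hw'c.abs
  have hwbar : wbar ∈ Icc m M := integral_mem_Icc hwc hmM
  have hpt : ∀ t ∈ Icc (0:ℝ) 1,
      (w t - wbar) * (-d * w'' t) ≤ L * A ^ 2 + F wbar * (w t - wbar) := by
    intro t ht
    have hlip := hF.dist_le_mul (w t) (hmM ht) wbar hwbar
    rw [Real.dist_eq, Real.dist_eq] at hlip
    have hsq : (w t - wbar) ^ 2 ≤ A ^ 2 :=
      sq_le_sq.2 ((abs_sub_integral_le hwc (hosc t ht)).trans (le_abs_self A))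
    have : (w t - wbar) * (F (w t) - F wbar) ≤ L * (w t - wbar) ^ 2 := by
      calc (w t - wbar) * (F (w t) - F wbar) ≤ |w t - wbar| * |F (w t) - F wbar| := by
            rw [← abs_mul]; exact le_abs_self _
        _ ≤ |w t - wbar| * (L * |w t - wbar|) := by gcongr
        _ = L * (w t - wbar) ^ 2 := by rw [← sq_abs (w t - wbar)]; ring
    rw [show -d * w'' t = F (w t) by linarith [heq t ht]]
    nlinarith [mul_le_mul_of_nonneg_left hsq L.2]
  have hdI : d * I ≤ L * A ^ 2 := by
    have hibp := integral_sub_mul_deriv2_eq_neg zero_le_one wbar hw hw' hw'' h0 h1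
    have hmean : ∫ t in (0:ℝ)..1, (w t - wbar) = 0 := by
      rw [intervalIntegral.integral_sub (hwc.intervalIntegrable_of_Icc zero_le_one)
        intervalIntegrable_const]
      simp [wbar]
    have hi : IntervalIntegrable (fun t => w t - wbar) volume 0 1 :=
      (hwc.sub continuousOn_const).intervalIntegrable_of_Icc zero_le_one
    have hi' : IntervalIntegrable (fun t => (w t - wbar) * (-d * w'' t)) volume 0 1 :=
      ((hwc.sub continuousOn_const).mul (continuousOn_const.mul hw'')).intervalIntegrable_of_Icc
        zero_le_one
    have hmono := intervalIntegral.integral_mono_on zero_le_one hi'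
      (intervalIntegrable_const.add (hi.const_mul (F wbar))) hpt
    have hlhs : ∫ t in (0:ℝ)..1, (w t - wbar) * (-d * w'' t) = d * I := by
      simp only [mul_left_comm _ (-d), intervalIntegral.integral_const_mul, hibp]
      ring
    rw [hlhs, intervalIntegral.integral_add intervalIntegrable_const (hi.const_mul _),
      intervalIntegral.integral_const_mul (F wbar), hmean] at hmono
    simpa using hmono
  have hI : I = 0 := by
    have : 0 ≤ I := intervalIntegral.integral_nonneg zero_le_one fun t _ => sq_nonneg _
    nlinarith [mul_le_mul_of_nonneg_left hAI L.2]
  have hA : A = 0 := by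
    have : 0 ≤ A := intervalIntegral.integral_nonneg zero_le_one fun t _ => abs_nonneg _
    nlinarith
  have := hosc x hx y hy
  rw [hA, abs_nonpos_iff, sub_eq_zero] at this
  exact this

/-- Nonexistence of nonconstant solutions for large diffusion (Lemma 4.3 /
Theorem 3.1): there is `d̄ > 0` depending only on the data such that for `d > d̄`
every solution `(w, τ)` of the one-dimensional limiting system has `w` constant. -/
theorem stmt_6 (a₁ a₂ b₁ b₂ c₁ c₂ γ δ : ℝ)
    (ha₁ : 0 < a₁) (ha₂ : 0 < a₂) (hb₁ : 0 < b₁) (hb₂ : 0 < b₂)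
    (hc₁ : 0 < c₁) (hc₂ : 0 < c₂) (hγ : 0 < γ) (hδ : 0 < δ) :
    ∃ dbar > 0, ∀ d : ℝ, dbar < d → ∀ (τ : ℝ) (w w' w'' : ℝ → ℝ), 0 < τ →
      (∀ x ∈ Icc (0:ℝ) 1, HasDerivWithinAt w (w' x) (Icc 0 1) x) →
      (∀ x ∈ Icc (0:ℝ) 1, HasDerivWithinAt w' (w'' x) (Icc 0 1) x) →
      ContinuousOn w'' (Icc 0 1) →
      (∀ x ∈ Icc (0:ℝ) 1,
        d * w'' x + hfun a₁ a₂ b₁ b₂ c₁ c₂ γ (Ufun γ δ (w x) τ) τ = 0) →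
      w' 0 = 0 → w' 1 = 0 →
      (∫ x in (0:ℝ)..1,
        (Ufun γ δ (w x) τ * (a₁ - b₁ * Ufun γ δ (w x) τ) - c₁ * τ)) = 0 →
      ∀ x ∈ Icc (0:ℝ) 1, ∀ y ∈ Icc (0:ℝ) 1, w x = w y := by
  obtain ⟨L, hL, hlip⟩ :=
    exists_lipschitzOnWith_hfun_Ufun ha₁.le ha₂.le hb₁ hb₂.le hc₁ hc₂ hγ hδ
  refine ⟨L, hL, fun d hd τ w w' w'' hτ hw hw' hw'' heq h0 h1 hint x hx y hy => ?_⟩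
  have hd0 : 0 < d := (NNReal.coe_pos.2 hL).trans hd
  have hwc : ContinuousOn w (Icc 0 1) := fun t ht => (hw t ht).continuousWithinAt
  obtain ⟨xm, hxm, hmin⟩ := isCompact_Icc.exists_isMinOn (nonempty_Icc.2 zero_le_one) hwc
  obtain ⟨xM, hxM, hmax⟩ := isCompact_Icc.exists_isMaxOn (nonempty_Icc.2 zero_le_one) hwc
  have hM : 0 ≤ hfun a₁ a₂ b₁ b₂ c₁ c₂ γ (Ufun γ δ (w xM) τ) τ := by
    nlinarith [heq xM hxM, deriv2_nonpos_of_isMaxOn zero_lt_one hw hw' hw'' h0 h1 hxM hmax]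
  have hm : hfun a₁ a₂ b₁ b₂ c₁ c₂ γ (Ufun γ δ (w xm) τ) τ ≤ 0 := by
    nlinarith [heq xm hxm, deriv2_nonneg_of_isMinOn zero_lt_one hw hw' hw'' h0 h1 hxm hmin]
  have hτ' := four_mul_le_sq_of_integral_eq_zero hb₁ (continuous_Ufun.comp_continuousOn hwc) hint
  exact eq_of_neumann_of_lipschitzOnWith hd hw hw' hw'' h0 h1 (fun t ht => ⟨hmin ht, hmax ht⟩)
    (hlip τ _ _ hτ hτ' (hmin hxM) hM hm) heq hx hy
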